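/- arXiv:1912.12039 — 7 statements merged into one kernel-verified Lean document; each statement's English description precedes it below -/
import Mathlib

section
/- Let S ≥ 2 and let b be an S×S matrix with entries in {0,1} whose rows are indexed 1,…,S, such that b_{1,u} = 1 for all columns u and every row sum β_j = Σ_{s} b_{j,s} is at least 1. For each column s define q_s = (b_{1,s}/β_1) · ∏_{j=2}^{S} (1 − b_{j,s}/β_j) and q = Σ_{s=1}^{S} q_s. Suppose s is a column with q_s ≤ q_u for all columns u, and i ≥ 2 is a row with b_{i,s} = 1 and β_i ≥ 2. If b' is the matrix obtained from b by changing the entry b_{i,s} from 1 to 0, then the corresponding value q' computed from b' satisfies q' ≤ q. -/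
open Finset

/-- `qcol b s = (b 0 s / β 0) · ∏_{j ≠ 0} (1 − b j s / β j)`, where `β j = ∑_u b j u`
is the `j`-th row sum; row `0` plays the role of "row 1" of the paper. -/
noncomputable def qcol {S : ℕ} [NeZero S] (b : Fin S → Fin S → ℝ) (s : Fin S) : ℝ :=
  (b 0 s / ∑ u, b 0 u) * ∏ j ∈ univ.erase (0 : Fin S), (1 - b j s / ∑ u, b j u)

/-- `qval b = ∑_s qcol b s`, the probability that node 1 gets scheduled in a round. -/
noncomputable def qval {S : ℕ} [NeZero S] (b : Fin S → Fin S → ℝ) : ℝ :=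
  ∑ s, qcol b s

/-!
Removing slot `s` from node `i`'s candidates changes row `i`'s factor `1 - b i u / β` of
`qcol` and nothing else. With `β` the row sum of `i`, column `s` gains `q_s / (β - 1)`, and
each of the `β - 1` other columns `u` tried by `i` loses `q_u / (β - 1)²`. As `s` minimizes
`q_u`, the losses add up to at least `q_s / (β - 1)`.
-/

def eraseEntry {ι κ : Type*} [DecidableEq ι] [DecidableEq κ] (b : ι → κ → ℝ) (i : ι) (s : κ) :
    ι → κ → ℝ :=
  fun j u => if j = i ∧ u = s then 0 else b j u

theorem sum_eraseEntry_row {ι κ : Type*} [DecidableEq ι] [DecidableEq κ] [Fintype κ]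
    (b : ι → κ → ℝ) (i : ι) (s : κ) :
    ∑ u, eraseEntry b i s i u = ∑ u, b i u - b i s := by
  rw [← sum_erase_add _ _ (mem_univ s), ← sum_erase_add _ (b i) (mem_univ s)]
  have hoff : ∀ u ∈ univ.erase s, eraseEntry b i s i u = b i u := fun u hu => by
    simp [eraseEntry, ne_of_mem_erase hu]
  rw [sum_congr rfl hoff]
  simp [eraseEntry]

section

variable {S : ℕ} [NeZero S]

theorem qcol_mul_eq_of_eq_off_row {b b' : Fin S → Fin S → ℝ} {i : Fin S} (hi : i ≠ 0)
    (hoff : ∀ j, j ≠ i → b' j = b j) (u : Fin S) :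
    qcol b' u * (1 - b i u / ∑ v, b i v) = qcol b u * (1 - b' i u / ∑ v, b' i v) := by
  have hmem : i ∈ univ.erase (0 : Fin S) := mem_erase.mpr ⟨hi, mem_univ i⟩
  have hrest : ∏ j ∈ (univ.erase (0 : Fin S)).erase i, (1 - b' j u / ∑ v, b' j v)
      = ∏ j ∈ (univ.erase (0 : Fin S)).erase i, (1 - b j u / ∑ v, b j v) :=
    prod_congr rfl fun j hj => by rw [hoff j (ne_of_mem_erase hj)]
  simp only [qcol, ← mul_prod_erase _ _ hmem, hrest, hoff 0 hi.symm]
  ring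

theorem qcol_eraseEntry_sub (b : Fin S → Fin S → ℝ) {i s : Fin S} (hi : i ≠ 0)
    (hbi01 : ∀ u, b i u = 0 ∨ b i u = 1) (hbis : b i s = 1) (hβ : 1 < ∑ v, b i v)
    (u : Fin S) :
    qcol (eraseEntry b i s) u - qcol b u =
      if u = s then qcol b s / (∑ v, b i v - 1)
      else -(b i u * qcol b u) / (∑ v, b i v - 1) ^ 2 := by
  have hcross := qcol_mul_eq_of_eq_off_row (b := b) (b' := eraseEntry b i s) hi
    (fun j hj => funext fun v => by simp [eraseEntry, hj]) u
  rw [sum_eraseEntry_row, hbis] at hcross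
  set β := ∑ v, b i v
  have hβ0 : β ≠ 0 := by linarith
  have hβ1 : β - 1 ≠ 0 := by linarith
  by_cases hus : u = s
  · subst hus
    simp only [eraseEntry, hbis, and_self, if_true, zero_div, sub_zero, mul_one] at hcross ⊢
    field_simp at hcross ⊢
    linear_combination hcross
  · simp only [eraseEntry, hus, and_false, if_false] at hcross ⊢
    rcases hbi01 u with h | h
    · simp only [h, zero_div, sub_zero, mul_one] at hcross ⊢
      simp [hcross]
    · rw [h] at hcross ⊢
      field_simp at hcross ⊢
      linear_combination hcross

theorem qval_eraseEntry_sub (b : Fin S → Fin S → ℝ) {i s : Fin S} (hi : i ≠ 0)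
    (hbi01 : ∀ u, b i u = 0 ∨ b i u = 1) (hbis : b i s = 1) (hβ : 1 < ∑ v, b i v) :
    qval (eraseEntry b i s) - qval b =
      (qcol b s * (∑ v, b i v - 1) - ∑ u ∈ univ.erase s, b i u * qcol b u)
        / (∑ v, b i v - 1) ^ 2 := by
  have hβ1 : ∑ v, b i v - 1 ≠ 0 := by linarith
  simp only [qval, ← sum_sub_distrib, qcol_eraseEntry_sub b hi hbi01 hbis hβ]
  rw [← sum_erase_add _ _ (mem_univ s), if_pos rfl,
    sum_congr rfl fun u hu => if_neg (ne_of_mem_erase hu), ← sum_div, sum_neg_distrib]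
  field_simp
  ring

end

theorem qval_le_of_erase_entry_general {S : ℕ} [NeZero S]
    (b : Fin S → Fin S → ℝ)
    (hb01 : ∀ j u, b j u = 0 ∨ b j u = 1)
    (s i : Fin S) (hi : i ≠ 0)
    (hmin : ∀ u, qcol b s ≤ qcol b u)
    (hbis : b i s = 1) (hβi : 2 ≤ ∑ u, b i u) :
    qval (fun j u => if j = i ∧ u = s then 0 else b j u) ≤ qval b := by
  have hrow_erase : ∑ u ∈ univ.erase s, b i u = ∑ u, b i u - 1 := by
    rw [← sum_erase_add _ _ (mem_univ s), hbis, add_sub_cancel_right]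
  have hlosses : qcol b s * (∑ u, b i u - 1) ≤ ∑ u ∈ univ.erase s, b i u * qcol b u :=
    calc qcol b s * (∑ u, b i u - 1) = ∑ u ∈ univ.erase s, b i u * qcol b s := by
          rw [← sum_mul, hrow_erase, mul_comm]
      _ ≤ ∑ u ∈ univ.erase s, b i u * qcol b u := by
          gcongr with u
          · rcases hb01 i u with h | h <;> simp [h]
          · exact hmin u
  change qval (eraseEntry b i s) ≤ qval b
  rw [← sub_nonpos, qval_eraseEntry_sub b hi (hb01 i) hbis (by linarith)]
  exact div_nonpos_of_nonpos_of_nonneg (by linarith) (sq_nonneg _)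

/-- Lemma 3: for a 0/1 matrix `b` whose first row is all ones and whose row sums are
all at least 1, if `s` is a column minimizing `qcol b`, and `i` is a non-first row
with `b i s = 1` and row sum at least 2, then changing the entry `b i s` from 1 to 0
does not increase `q`. -/
theorem qval_le_of_erase_entry {S : ℕ} [NeZero S] (hS : 2 ≤ S)
    (b : Fin S → Fin S → ℝ)
    (hb01 : ∀ j u, b j u = 0 ∨ b j u = 1)
    (hrow1 : ∀ u, b 0 u = 1)
    (hβ : ∀ j, 1 ≤ ∑ u, b j u)
    (s i : Fin S) (hi : i ≠ 0)
    (hmin : ∀ u, qcol b s ≤ qcol b u)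
    (hbis : b i s = 1) (hβi : 2 ≤ ∑ u, b i u) :
    qval (fun j u => if j = i ∧ u = s then 0 else b j u) ≤ qval b :=
  qval_le_of_erase_entry_general b hb01 s i hi hmin hbis hβi
end

section
/- Let S ≥ 2 and let b be an S×S matrix with entries in {0,1} such that b_{1,u} = 1 for all columns u and every row sum β_i = Σ_s b_{i,s} equals 2 for all rows i ≥ 2. For each column s define the column sum excluding the first row α_s = Σ_{i=2}^{S} b_{i,s}, the quantity q_s = (1/S) · ∏_{j=2}^{S} (1 − b_{j,s}/β_j), and q = Σ_{s=1}^{S} q_s. Suppose s and u are two columns with α_s > α_u, and i ≥ 2 is a row with b_{i,s} = 1 and b_{i,u} = 0. If b' is obtained from b by interchanging these two entries (setting b'_{i,s} = 0 and b'_{i,u} = 1), then the corresponding value q' satisfies q' ≤ q. -/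
open Finset

/-!
Only columns `s` and `u` change, and only through row `i`. With the first row all ones and
the other row sums equal to 2, `q_v = (1 - b_{i,v}/2) · P_v / S`, where `P_v` is the product
of `1 - b_{j,v}/2` over the rows `j ∉ {0, i}`, which the move leaves alone. Hence
`q - q' = (P_u - P_s) / (2S)`. For 0/1 entries `P_v = (1/2)^{#ones}`, and the integer
inequality `α_u < α_s` gives column `s` at least as many ones as column `u` outside row `i`,
so `P_s ≤ P_u`.
-/

section MoveEntry

variable {ι κ R : Type*} [DecidableEq ι] [DecidableEq κ]

def moveEntry [Zero R] [One R] (b : ι → κ → R) (i : ι) (s u : κ) : ι → κ → R :=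
  fun j v => if j = i ∧ v = s then 0 else if j = i ∧ v = u then 1 else b j v

variable [Ring R] (b : ι → κ → R) {i j : ι} {s u v : κ}

lemma moveEntry_of_ne_row (hj : j ≠ i) : moveEntry b i s u j v = b j v := by
  simp [moveEntry, hj]

lemma moveEntry_of_ne_col (hs : v ≠ s) (hu : v ≠ u) : moveEntry b i s u i v = b i v := by
  simp [moveEntry, hs, hu]

lemma moveEntry_left : moveEntry b i s u i s = 0 := by
  simp [moveEntry]

lemma moveEntry_right (hsu : s ≠ u) : moveEntry b i s u i u = 1 := by
  simp [moveEntry, hsu.symm]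

lemma sum_moveEntry_sub_sum [Fintype κ] (hsu : s ≠ u) (f : κ → R → R) :
    ∑ v, f v (moveEntry b i s u i v) - ∑ v, f v (b i v)
      = (f s 0 - f s (b i s)) + (f u 1 - f u (b i u)) := by
  rw [← sum_sub_distrib, Fintype.sum_eq_add s u hsu fun v ⟨hs, hu⟩ => by
      rw [moveEntry_of_ne_col b hs hu, sub_self],
    moveEntry_left, moveEntry_right b hsu]

lemma sum_moveEntry [Fintype κ] (hsu : s ≠ u) (hs : b i s = 1) (hu : b i u = 0) (j : ι) :
    ∑ v, moveEntry b i s u j v = ∑ v, b j v := by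
  obtain rfl | hj := eq_or_ne j i
  · rw [← sub_eq_zero, sum_moveEntry_sub_sum b hsu fun _ x => x, hs, hu]
    abel
  · exact sum_congr rfl fun v _ => moveEntry_of_ne_row b hj

end MoveEntry

section ZeroOne

variable {ι : Type*} (t : Finset ι) {x y : ι → ℝ}

lemma sum_eq_card_filter_eq_one (hx : ∀ j ∈ t, x j = 0 ∨ x j = 1) :
    ∑ j ∈ t, x j = #{j ∈ t | x j = 1} := by
  rw [← sum_boole]
  refine sum_congr rfl fun j hj => ?_
  rcases hx j hj with h | h <;> simp [h]

lemma prod_one_sub_half_eq_pow (hx : ∀ j ∈ t, x j = 0 ∨ x j = 1) :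
    ∏ j ∈ t, (1 - x j / 2) = (1 / 2) ^ #{j ∈ t | x j = 1} := by
  have hfactor : ∀ j ∈ t, 1 - x j / 2 = if x j = 1 then 1 / 2 else 1 := fun j hj => by
    rcases hx j hj with h | h <;> norm_num [h]
  rw [prod_congr rfl hfactor, prod_ite, prod_const, prod_const_one, mul_one]

lemma prod_one_sub_half_le_of_sum_lt (hx : ∀ j ∈ t, x j = 0 ∨ x j = 1)
    (hy : ∀ j ∈ t, y j = 0 ∨ y j = 1) (h : ∑ j ∈ t, y j < ∑ j ∈ t, x j + 1) :
    ∏ j ∈ t, (1 - x j / 2) ≤ ∏ j ∈ t, (1 - y j / 2) := by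
  rw [sum_eq_card_filter_eq_one t hx, sum_eq_card_filter_eq_one t hy] at h
  rw [prod_one_sub_half_eq_pow t hx, prod_one_sub_half_eq_pow t hy]
  have hcard : #{j ∈ t | y j = 1} < #{j ∈ t | x j = 1} + 1 := by exact_mod_cast h
  exact pow_le_pow_of_le_one (by norm_num) (by norm_num) (Nat.lt_succ_iff.mp hcard)

end ZeroOne

lemma qcol_eq_mul_prod_div {S : ℕ} [NeZero S] {c : Fin S → Fin S → ℝ} (h0 : ∀ v, c 0 v = 1)
    (hβ : ∀ j, j ≠ 0 → ∑ v, c j v = 2) {i : Fin S} (hi : i ≠ 0) (v : Fin S) :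
    qcol c v = (1 - c i v / 2) * (∏ j ∈ (univ.erase 0).erase i, (1 - c j v / 2)) / S := by
  have hprod : ∏ j ∈ univ.erase 0, (1 - c j v / ∑ w, c j w)
      = ∏ j ∈ univ.erase 0, (1 - c j v / 2) :=
    prod_congr rfl fun j hj => by rw [hβ j (ne_of_mem_erase hj)]
  rw [qcol, hprod, ← mul_prod_erase _ _ (mem_erase.2 ⟨hi, mem_univ i⟩)]
  simp [h0, div_eq_inv_mul, mul_comm]

theorem qval_le_of_swap_entries_general {S : ℕ} [NeZero S]
    (b : Fin S → Fin S → ℝ)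
    (hb01 : ∀ j v, b j v = 0 ∨ b j v = 1)
    (hrow1 : ∀ v, b 0 v = 1)
    (hβ : ∀ j, j ≠ 0 → ∑ v, b j v = 2)
    (s u i : Fin S) (hi : i ≠ 0)
    (hα : ∑ j ∈ univ.erase (0 : Fin S), b j u < ∑ j ∈ univ.erase (0 : Fin S), b j s)
    (hbis : b i s = 1) (hbiu : b i u = 0) :
    qval (fun j v => if j = i ∧ v = s then 0 else if j = i ∧ v = u then 1 else b j v)
      ≤ qval b := by
  change qval (moveEntry b i s u) ≤ qval b
  have hsu : s ≠ u := by rintro rfl; simp [hbis] at hbiu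
  set T := (univ.erase (0 : Fin S)).erase i
  set P := fun v => ∏ j ∈ T, (1 - b j v / 2)
  have hq : ∀ v, qcol b v = (1 - b i v / 2) * P v / S := qcol_eq_mul_prod_div hrow1 hβ hi
  have hq' : ∀ v, qcol (moveEntry b i s u) v = (1 - moveEntry b i s u i v / 2) * P v / S := by
    intro v
    rw [qcol_eq_mul_prod_div (fun v => (moveEntry_of_ne_row b (Ne.symm hi)).trans (hrow1 v))
      (fun j hj => (sum_moveEntry b hsu hbis hbiu j).trans (hβ j hj)) hi]
    congr 2
    exact prod_congr rfl fun j hj => by rw [moveEntry_of_ne_row b (ne_of_mem_erase hj)]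
  have hPsu : P s ≤ P u := by
    have hi0 : i ∈ univ.erase (0 : Fin S) := mem_erase.2 ⟨hi, mem_univ i⟩
    rw [← add_sum_erase _ _ hi0, ← add_sum_erase _ _ hi0, hbis, hbiu, zero_add, add_comm] at hα
    exact prod_one_sub_half_le_of_sum_lt T (fun j _ => hb01 j s) (fun j _ => hb01 j u) hα
  have hdiff : qval (moveEntry b i s u) - qval b = (P s - P u) / (2 * S) := by
    simp only [qval, hq, hq']
    rw [sum_moveEntry_sub_sum b hsu fun v x => (1 - x / 2) * P v / S, hbis, hbiu]
    ring
  have hdiff_nonpos : (P s - P u) / (2 * S) ≤ 0 :=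
    div_nonpos_of_nonpos_of_nonneg (by linarith) (by positivity)
  linarith

/-- Lemma 4: for a 0/1 matrix `b` whose first row is all ones and in which every
non-first row sum is exactly 2, if `s, u` are columns with `α s > α u` (column sums
excluding the first row), and `i` is a non-first row with `b i s = 1` and `b i u = 0`,
then interchanging these two entries does not increase `q`. -/
theorem qval_le_of_swap_entries {S : ℕ} [NeZero S] (hS : 2 ≤ S)
    (b : Fin S → Fin S → ℝ)
    (hb01 : ∀ j v, b j v = 0 ∨ b j v = 1)
    (hrow1 : ∀ v, b 0 v = 1)
    (hβ : ∀ j, j ≠ 0 → ∑ v, b j v = 2)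
    (s u i : Fin S) (hi : i ≠ 0)
    (hα : ∑ j ∈ univ.erase (0 : Fin S), b j u < ∑ j ∈ univ.erase (0 : Fin S), b j s)
    (hbis : b i s = 1) (hbiu : b i u = 0) :
    qval (fun j v => if j = i ∧ v = s then 0 else if j = i ∧ v = u then 1 else b j v)
      ≤ qval b :=
  qval_le_of_swap_entries_general b hb01 hrow1 hβ s u i hi hα hbis hbiu
end

section
/- Let S ≥ 2 be an integer and let α : {1,…,S} → ℕ be a function with Σ_{s=1}^{S} α_s = 2(S − 1). Then Σ_{s=1}^{S} (1/2)^{α_s} ≥ (S + 2)/4, with equality when exactly two of the α_s equal 1 and the remaining S − 2 of them equal 2. -/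
open Finset

lemma half_pow_lb (n : ℕ) : (3 - (n : ℝ)) / 4 ≤ (1 / 2) ^ n := by
  match n with
  | 0 => norm_num
  | 1 => norm_num
  | 2 => norm_num
  | (m + 3) =>
    have hm : (0 : ℝ) ≤ (m : ℝ) := Nat.cast_nonneg m
    have h1 : (3 - ((m + 3 : ℕ) : ℝ)) / 4 ≤ 0 := by push_cast; linarith
    have h2 : (0 : ℝ) < (1 / 2) ^ (m + 3) := by positivity
    linarith

/-- If `α : Fin S → ℕ` satisfies `∑ α s = 2(S−1)` with `S ≥ 2`, then
`∑ (1/2)^(α s) ≥ (S+2)/4`, with equality when exactly two of the `α s` equal 1 and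
the remaining `S − 2` of them equal 2. -/
theorem sum_half_pow_ge (S : ℕ) (hS : 2 ≤ S) (α : Fin S → ℕ)
    (hsum : ∑ s, α s = 2 * (S - 1)) :
    ((S : ℝ) + 2) / 4 ≤ ∑ s, ((1 : ℝ) / 2) ^ α s ∧
    (((univ.filter fun s => α s = 1).card = 2 ∧ ∀ s, α s ≠ 1 → α s = 2) →
      ∑ s, ((1 : ℝ) / 2) ^ α s = ((S : ℝ) + 2) / 4) := by
  have hcast : ((∑ s, α s : ℕ) : ℝ) = 2 * ((S : ℝ) - 1) := by
    rw [hsum]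
    have h1 : (1 : ℕ) ≤ S := by omega
    push_cast [h1]
    ring
  constructor
  · have h1 : ∑ s, (3 - ((α s : ℝ))) / 4 ≤ ∑ s, ((1 : ℝ) / 2) ^ α s :=
      Finset.sum_le_sum fun s _ => half_pow_lb (α s)
    have h2 : ∑ s : Fin S, (3 - ((α s : ℝ))) / 4 = ((S : ℝ) + 2) / 4 := by
      rw [← Finset.sum_div, Finset.sum_sub_distrib,
        Finset.sum_const, Finset.card_univ, Fintype.card_fin,
        ← Nat.cast_sum, hcast]
      push_cast
      ring
    linarith
  · rintro ⟨hcard, hrest⟩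
    rw [← Finset.sum_filter_add_sum_filter_not univ (fun s => α s = 1)]
    have hA : ∑ s ∈ univ.filter (fun s => α s = 1), ((1 : ℝ) / 2) ^ α s = 1 := by
      have h : ∀ s ∈ univ.filter (fun s => α s = 1),
          ((1 : ℝ) / 2) ^ α s = 1 / 2 := by
        intro s hs
        rw [Finset.mem_filter] at hs
        rw [hs.2]
        norm_num
      rw [Finset.sum_congr rfl h, Finset.sum_const, hcard]
      norm_num
    have hBcard : (univ.filter (fun s => ¬ α s = 1)).card = S - 2 := by
      have h := Finset.card_filter_add_card_filter_not
        (s := (univ : Finset (Fin S))) (p := fun s => α s = 1)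
      simp only [Finset.card_univ, Fintype.card_fin] at h
      omega
    have hB : ∑ s ∈ univ.filter (fun s => ¬ α s = 1), ((1 : ℝ) / 2) ^ α s
        = ((S : ℝ) - 2) / 4 := by
      have h : ∀ s ∈ univ.filter (fun s => ¬ α s = 1),
          ((1 : ℝ) / 2) ^ α s = 1 / 4 := by
        intro s hs
        rw [Finset.mem_filter] at hs
        rw [hrest s hs.2]
        norm_num
      rw [Finset.sum_congr rfl h, Finset.sum_const, hBcard, nsmul_eq_mul]
      have h2 : ((S - 2 : ℕ) : ℝ) = (S : ℝ) - 2 := by push_cast [hS]; ring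
      rw [h2]
      ring
    rw [hA, hB]
    ring
end

section
/- Let S ≥ 2 and let b be an S×S matrix with entries in {0,1} such that b_{1,u} = 1 for all columns u and every row sum β_i = Σ_s b_{i,s} equals 2 for all rows i ≥ 2. Define α_s = Σ_{i=2}^{S} b_{i,s} and q = Σ_{s=1}^{S} (1/S)·(1/2)^{α_s}. Then q ≥ (S + 2)/(4S). -/
/-!
Each row other than the first contributes two ones, so `∑ s, α s = 2 (S - 1)`. On the naturals,
`n ↦ (1/2)^n` lies above its chord `(3 - n)/4` through `n = 1` and `n = 2`; summing this over the
`S` columns gives `∑ s, (1/2)^(α s) ≥ (3 S - 2 (S - 1))/4 = (S + 2)/4`.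
-/

open Finset

lemma three_sub_div_four_le_one_half_pow (n : ℕ) : ((3 : ℝ) - n) / 4 ≤ (1 / 2 : ℝ) ^ n := by
  match n with
  | 0 | 1 | 2 => norm_num
  | m + 3 =>
    calc ((3 : ℝ) - (m + 3 : ℕ)) / 4 ≤ 0 := by push_cast; linarith [(m.cast_nonneg : (0 : ℝ) ≤ m)]
      _ ≤ _ := by positivity

lemma three_mul_card_sub_sum_div_four_le_sum_one_half_pow {ι : Type*} (s : Finset ι) (α : ι → ℕ) :
    (3 * #s - ∑ i ∈ s, (α i : ℝ)) / 4 ≤ ∑ i ∈ s, (1 / 2 : ℝ) ^ α i := by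
  calc (3 * #s - ∑ i ∈ s, (α i : ℝ)) / 4 = ∑ i ∈ s, ((3 : ℝ) - α i) / 4 := by
        rw [← sum_div, sum_sub_distrib, sum_const, nsmul_eq_mul, mul_comm]
    _ ≤ ∑ i ∈ s, (1 / 2 : ℝ) ^ α i :=
        sum_le_sum fun i _ => three_sub_div_four_le_one_half_pow (α i)

lemma sum_sum_eq_card_mul_of_forall_sum_eq {ι κ : Type*} [Fintype κ] (t : Finset ι)
    (b : ι → κ → ℕ) (c : ℕ) (hrow : ∀ i ∈ t, ∑ u, b i u = c) :
    ∑ s, ∑ i ∈ t, b i s = #t * c := by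
  rw [sum_comm, sum_congr rfl hrow, sum_const, smul_eq_mul]

theorem qval_ge_case1_general (S : ℕ) [NeZero S]
    (b : Fin S → Fin S → ℕ)
    (hβ : ∀ i, i ≠ 0 → ∑ u, b i u = 2) :
    ((S : ℝ) + 2) / (4 * S) ≤
      ∑ s, (1 / (S : ℝ)) * ((1 : ℝ) / 2) ^ (∑ i ∈ univ.erase (0 : Fin S), b i s) := by
  have hS : (0 : ℝ) < S := by exact_mod_cast NeZero.pos S
  have hα : ∑ s, ((∑ i ∈ univ.erase (0 : Fin S), b i s : ℕ) : ℝ) = 2 * S - 2 := by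
    rw [← Nat.cast_sum, sum_sum_eq_card_mul_of_forall_sum_eq _ b 2
      fun i hi => hβ i (ne_of_mem_erase hi), card_erase_of_mem (mem_univ _), card_fin,
      Nat.cast_mul, Nat.cast_sub NeZero.one_le]
    push_cast
    ring
  have key := three_mul_card_sub_sum_div_four_le_sum_one_half_pow univ
    fun s => ∑ i ∈ univ.erase (0 : Fin S), b i s
  rw [hα, card_univ, Fintype.card_fin] at key
  calc ((S : ℝ) + 2) / (4 * S) = 1 / S * ((3 * S - (2 * S - 2)) / 4) := by field_simp; ring
    _ ≤ _ := by rw [← mul_sum]; gcongr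

/-- Theorem 7 (Case 1): for a 0/1 matrix `b` whose first row is all ones and in which
every non-first row sum is exactly 2, the quantity
`q = ∑_s (1/S)·(1/2)^(α s)` (with `α s` the column sum excluding the first row)
satisfies `q ≥ (S+2)/(4S)`. -/
theorem qval_ge_case1 (S : ℕ) [NeZero S] (hS : 2 ≤ S)
    (b : Fin S → Fin S → ℕ)
    (hb01 : ∀ i u, b i u = 0 ∨ b i u = 1)
    (hrow1 : ∀ u, b 0 u = 1)
    (hβ : ∀ i, i ≠ 0 → ∑ u, b i u = 2) :
    ((S : ℝ) + 2) / (4 * S) ≤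
      ∑ s, (1 / (S : ℝ)) * ((1 : ℝ) / 2) ^ (∑ i ∈ univ.erase (0 : Fin S), b i s) :=
  qval_ge_case1_general S b hβ
end

section
/- The sequence S ↦ 1 − ((4S − 1)/(4S))^{S−2} · ((2S − 1)/(2S))^{2}, defined for integers S ≥ 1, converges to 1 − e^{−1/4} as S → ∞, where e is Euler's number. Numerically, 1 − e^{−1/4} ≈ 0.221. -/
open Filter

/-- Theorem 8: the sequence `S ↦ 1 − ((4S−1)/(4S))^(S−2) · ((2S−1)/(2S))²`, for
integers `S ≥ 1`, converges to `1 − e^(−1/4)` as `S → ∞`. -/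
theorem qmin_tendsto :
    Tendsto (fun S : ℕ =>
        1 - ((4 * (S : ℝ) - 1) / (4 * S)) ^ (S - 2) * ((2 * (S : ℝ) - 1) / (2 * S)) ^ 2)
      atTop (nhds (1 - Real.exp (-1 / 4))) := by
  have h1 : Tendsto (fun S : ℕ => (1 + (-1/4) / (S : ℝ)) ^ S) atTop
      (nhds (Real.exp (-1/4))) := Real.tendsto_one_add_div_pow_exp (-1/4)
  have hz : Tendsto (fun S : ℕ => (1 : ℝ) / (S : ℝ)) atTop (nhds 0) :=
    tendsto_const_div_atTop_nhds_zero_nat 1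
  have hbase : ∀ c : ℝ, Tendsto (fun S : ℕ => (1 + c / (S : ℝ))) atTop (nhds 1) := by
    intro c
    have := tendsto_const_div_atTop_nhds_zero_nat c
    simpa using tendsto_const_nhds.add this
  have main : Tendsto (fun S : ℕ =>
      (1 + (-1/4) / (S : ℝ)) ^ S / (1 + (-1/4) / (S : ℝ)) ^ 2
        * (1 + (-1/2) / (S : ℝ)) ^ 2) atTop (nhds (Real.exp (-1/4))) := by
    have h2 := ((hbase (-1/4)).pow 2)
    have h3 := ((hbase (-1/2)).pow 2)
    have := (h1.div h2 (by norm_num)).mul h3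
    simpa using this
  have hfinal := tendsto_const_nhds (x := (1 : ℝ)) |>.sub main
  refine hfinal.congr' ?_
  filter_upwards [eventually_ge_atTop 2] with S hS
  have hS0 : (0 : ℝ) < (S : ℝ) := by positivity
  have hSn : (S : ℝ) ≠ 0 := ne_of_gt hS0
  have hb : (1 : ℝ) + (-1/4) / (S : ℝ) = (4 * (S : ℝ) - 1) / (4 * S) := by
    field_simp; ring
  have hb2 : (1 : ℝ) + (-1/2) / (S : ℝ) = (2 * (S : ℝ) - 1) / (2 * S) := by
    field_simp; ring
  have hne : ((4 * (S : ℝ) - 1) / (4 * S)) ≠ 0 := by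
    have h1' : (1:ℝ) ≤ (S:ℝ) := by exact_mod_cast Nat.one_le_of_lt hS
    have : (0:ℝ) < 4 * (S:ℝ) - 1 := by linarith
    positivity
  have hpow : ((4 * (S : ℝ) - 1) / (4 * S)) ^ (S - 2)
      = ((4 * (S : ℝ) - 1) / (4 * S)) ^ S / ((4 * (S : ℝ) - 1) / (4 * S)) ^ 2 :=
    pow_sub₀ _ hne hS
  simp only [hb, hb2, hpow]
end

section
/- Let a : ℕ → ℝ be a sequence with a(1) = 0 and a(n) = 1 + (1/(n−1)) · Σ_{l=1}^{n−1} a(l) for all integers n ≥ 2. Then for all n ≥ 1, a(n) = Σ_{l=1}^{n−1} 1/l (the (n−1)-st harmonic number). -/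
open Finset

/-!
Clearing the denominator, `(n - 1) a n = (n - 1) + ∑_{1 ≤ l < n} a l`. Subtracting this identity at
`n` from the one at `n + 1` cancels all but the last term of the sum and leaves
`n a (n + 1) = 1 + n a n`, i.e. `a (n + 1) = a n + 1/n`; from `a 1 = 0` the harmonic numbers follow.
-/

section DSLRRecurrence

variable {a : ℕ → ℝ}
  (hrec : ∀ n, 2 ≤ n → a n = 1 + (1 / ((n : ℝ) - 1)) * ∑ l ∈ Icc 1 (n - 1), a l)
include hrec

theorem mul_eq_add_sum_of_recurrence (n : ℕ) :
    (n : ℝ) * a (n + 1) = n + ∑ l ∈ Icc 1 n, a l := by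
  rcases Nat.eq_zero_or_pos n with rfl | hn
  · simp
  · have hn' : (n : ℝ) ≠ 0 := by positivity
    have := hrec (n + 1) (by omega)
    rw [Nat.add_sub_cancel, Nat.cast_succ, add_sub_cancel_right] at this
    rw [this]
    field_simp

theorem succ_eq_add_inv_of_recurrence (n : ℕ) :
    a (n + 2) = a (n + 1) + 1 / ((n : ℝ) + 1) := by
  have hcur := mul_eq_add_sum_of_recurrence hrec n
  have hnext := mul_eq_add_sum_of_recurrence hrec (n + 1)
  rw [sum_Icc_succ_top (by omega)] at hnext
  push_cast at hnext
  field_simp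
  linear_combination hnext - hcur

theorem eq_sum_inv_of_recurrence (h1 : a 1 = 0) (n : ℕ) :
    a (n + 1) = ∑ l ∈ Icc 1 n, (1 : ℝ) / l := by
  induction n with
  | zero => simp [h1]
  | succ n ih =>
    rw [succ_eq_add_inv_of_recurrence hrec, ih, sum_Icc_succ_top (by omega)]
    push_cast
    rfl

end DSLRRecurrence

/-- The recurrence `a 1 = 0`, `a n = 1 + (1/(n−1)) ∑_{l=1}^{n−1} a l` for `n ≥ 2`,
has solution `a n = ∑_{l=1}^{n−1} 1/l`, the `(n−1)`-st harmonic number. -/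
theorem dslr_recurrence_harmonic (a : ℕ → ℝ)
    (h1 : a 1 = 0)
    (hrec : ∀ n, 2 ≤ n → a n = 1 + (1 / ((n : ℝ) - 1)) * ∑ l ∈ Icc 1 (n - 1), a l) :
    ∀ n, 1 ≤ n → a n = ∑ l ∈ Icc 1 (n - 1), (1 : ℝ) / l := by
  rintro n hn
  obtain ⟨m, rfl⟩ := Nat.exists_eq_add_of_le' hn
  simpa using eq_sum_inv_of_recurrence hrec h1 m
end

section
/- Let 0 < μ < 1 be a real number and n a positive integer. Then the series Σ_{r=0}^∞ (1 − (1 − μ^r)^n) converges and satisfies ∫_0^∞ (1 − (1 − μ^r)^n) dr ≤ Σ_{r=0}^∞ (1 − (1 − μ^r)^n) ≤ 1 + ∫_0^∞ (1 − (1 − μ^r)^n) dr; consequently Σ_{r=0}^∞ (1 − (1 − μ^r)^n) ≤ 1 + (Σ_{k=1}^{n} 1/k)/(−log μ). -/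
/-!
Writing `t = μ^y`, the identity `1 - (1 - t)^n = ∑_{k<n} t (1 - t)^k` exhibits the integrand
`1 - (1 - μ^y)^n` as the derivative of `∑_{k<n} (1 - μ^y)^(k+1) / ((k+1)(-log μ))`, which vanishes at
`0` and tends to `H_n / (-log μ)`; since the integrand is nonnegative, this gives both its
integrability on `(0, ∞)` and the value of the integral. The integrand is antitone on `[0, ∞)`, so
the integral test compares the series with the integral from below, and from above up to the first
term `1 - (1 - μ^0)^n = 1`.
-/

open Finset Set Filter Topology MeasureTheory

lemma one_sub_one_sub_pow_eq_sum {R : Type*} [CommRing R] (t : R) (n : ℕ) :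
    1 - (1 - t) ^ n = ∑ k ∈ range n, t * (1 - t) ^ k := by
  rw [← mul_sum, ← mul_neg_geom_sum, sub_sub_cancel]

lemma sum_range_one_div_succ_eq_sum_Icc (n : ℕ) :
    ∑ k ∈ range n, (1 : ℝ) / (k + 1) = ∑ k ∈ Icc 1 n, (1 : ℝ) / k := by
  rw [← Finset.Ico_add_one_right_eq_Icc, sum_Ico_eq_sum_range]
  simp [add_comm]

namespace Real

variable {μ : ℝ}

lemma one_sub_one_sub_rpow_pow_nonneg (hμ0 : 0 ≤ μ) (hμ1 : μ ≤ 1) (n : ℕ) {x : ℝ}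
    (hx : 0 ≤ x) :
    0 ≤ 1 - (1 - μ ^ x) ^ n :=
  sub_nonneg.2 <| pow_le_one₀ (sub_nonneg.2 (rpow_le_one hμ0 hμ1 hx))
    (sub_le_self _ (rpow_nonneg hμ0 x))

lemma antitoneOn_one_sub_one_sub_rpow_pow (hμ0 : 0 < μ) (hμ1 : μ ≤ 1) (n : ℕ) :
    AntitoneOn (fun x : ℝ => 1 - (1 - μ ^ x) ^ n) (Ici 0) := fun x hx y _ hxy => by
  have : (1 - μ ^ x) ^ n ≤ (1 - μ ^ y) ^ n :=
    pow_le_pow_left₀ (sub_nonneg.2 (rpow_le_one hμ0.le hμ1 hx))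
      (sub_le_sub_left (rpow_le_rpow_of_exponent_ge hμ0 hμ1 hxy) 1) n
  exact sub_le_sub_left this 1

lemma hasDerivAt_sum_one_sub_rpow_pow_div (hμ0 : 0 < μ) (hμ1 : μ ≠ 1) (n : ℕ) (x : ℝ) :
    HasDerivAt (fun y : ℝ => (∑ k ∈ range n, (1 - μ ^ y) ^ (k + 1) / (k + 1)) / -log μ)
      (1 - (1 - μ ^ x) ^ n) x := by
  have hlog : log μ ≠ 0 := log_ne_zero_of_pos_of_ne_one hμ0 hμ1
  have hrpow : HasDerivAt (fun y => 1 - μ ^ y) (-(μ ^ x * log μ)) x :=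
    ((hasStrictDerivAt_const_rpow hμ0 x).hasDerivAt).const_sub 1
  have hterm : ∀ k ∈ range n, HasDerivAt (fun y => (1 - μ ^ y) ^ (k + 1) / (k + 1))
      (-log μ * (μ ^ x * (1 - μ ^ x) ^ k)) x := fun k _ =>
    ((hrpow.pow (k + 1)).div_const ((k : ℝ) + 1)).congr_deriv (by
      field_simp
      push_cast
      ring)
  refine ((HasDerivAt.fun_sum hterm).div_const (-log μ)).congr_deriv ?_
  rw [one_sub_one_sub_pow_eq_sum, ← mul_sum]
  field_simp

lemma tendsto_sum_one_sub_rpow_pow_div (hμ0 : 0 < μ) (hμ1 : μ < 1) (n : ℕ) :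
    Tendsto (fun y : ℝ => (∑ k ∈ range n, (1 - μ ^ y) ^ (k + 1) / (k + 1)) / -log μ) atTop
      (𝓝 ((∑ k ∈ Icc 1 n, (1 : ℝ) / k) / -log μ)) := by
  have h : Tendsto (fun y : ℝ => 1 - μ ^ y) atTop (𝓝 (1 - 0)) :=
    tendsto_const_nhds.sub (tendsto_rpow_atTop_of_base_lt_one μ (by linarith) hμ1)
  rw [sub_zero] at h
  rw [← sum_range_one_div_succ_eq_sum_Icc]
  refine (tendsto_finsetSum _ fun k _ => ?_).div_const _
  simpa using (h.pow (k + 1)).div_const ((k : ℝ) + 1)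

lemma integrableOn_one_sub_one_sub_rpow_pow (hμ0 : 0 < μ) (hμ1 : μ < 1) (n : ℕ) :
    IntegrableOn (fun x : ℝ => 1 - (1 - μ ^ x) ^ n) (Ioi 0) :=
  integrableOn_Ioi_deriv_of_nonneg'
    (fun x _ => hasDerivAt_sum_one_sub_rpow_pow_div hμ0 hμ1.ne n x)
    (fun _ hx => one_sub_one_sub_rpow_pow_nonneg hμ0.le hμ1.le n hx.le)
    (tendsto_sum_one_sub_rpow_pow_div hμ0 hμ1 n)

lemma integral_Ioi_one_sub_one_sub_rpow_pow (hμ0 : 0 < μ) (hμ1 : μ < 1) (n : ℕ) :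
    ∫ x in Ioi (0 : ℝ), (1 - (1 - μ ^ x) ^ n) = (∑ k ∈ Icc 1 n, (1 : ℝ) / k) / -log μ := by
  rw [integral_Ioi_of_hasDerivAt_of_nonneg'
    (fun x _ => hasDerivAt_sum_one_sub_rpow_pow_div hμ0 hμ1.ne n x)
    (fun _ hx => one_sub_one_sub_rpow_pow_nonneg hμ0.le hμ1.le n hx.le)
    (tendsto_sum_one_sub_rpow_pow_div hμ0 hμ1 n)]
  simp

end Real

/-- For `0 < μ < 1` and a positive integer `n`, the series
`∑_{r=0}^∞ (1 − (1 − μ^r)ⁿ)` converges, is sandwiched between the integral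
`∫_0^∞ (1 − (1 − μ^r)ⁿ) dr` and `1` plus that integral, and consequently is at most
`1 + (∑_{k=1}^n 1/k)/(−log μ)`. -/
theorem sum_expected_max_geometric_bounds (μ : ℝ) (hμ0 : 0 < μ) (hμ1 : μ < 1)
    (n : ℕ) (hn : 1 ≤ n) :
    Summable (fun r : ℕ => 1 - (1 - μ ^ r) ^ n) ∧
    (∫ r in Set.Ioi (0 : ℝ), (1 - (1 - μ ^ r) ^ n)) ≤
      ∑' r : ℕ, (1 - (1 - μ ^ r) ^ n) ∧
    ∑' r : ℕ, (1 - (1 - μ ^ r) ^ n) ≤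
      1 + ∫ r in Set.Ioi (0 : ℝ), (1 - (1 - μ ^ r) ^ n) ∧
    ∑' r : ℕ, (1 - (1 - μ ^ r) ^ n) ≤
      1 + (∑ k ∈ Icc 1 n, (1 : ℝ) / k) / (-Real.log μ) := by
  have anti := Real.antitoneOn_one_sub_one_sub_rpow_pow hμ0 hμ1.le n
  have integrable := Real.integrableOn_one_sub_one_sub_rpow_pow hμ0 hμ1 n
  have nonneg : ∀ x ∈ Ioi (0 : ℝ), 0 ≤ 1 - (1 - μ ^ x) ^ n :=
    fun _ hx => Real.one_sub_one_sub_rpow_pow_nonneg hμ0.le hμ1.le n hx.le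
  have summable := anti.summable_of_integrableOn_Ioi_zero integrable nonneg
  have lower := anti.integral_le_tsum summable nonneg
  have upper := anti.tsum_le_integral integrable nonneg
  simp only [Real.rpow_natCast, Real.rpow_zero, sub_self, zero_pow (by omega : n ≠ 0), sub_zero]
    at summable lower upper
  exact ⟨summable, lower, upper, Real.integral_Ioi_one_sub_one_sub_rpow_pow hμ0 hμ1 n ▸ upper⟩
end
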